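/- arXiv:2402.11787 — 3 statements merged into one kernel-verified Lean document; each statement's English description precedes it below -/
import Mathlib

section
/- Let -1 ≤ β < α < 1 with β < 0, and set μ = (1-β)/(α-β). Let G be the associated α-graph of a spherical {α,β}-code, with adjacency matrix A_G. Then the independence number t of G satisfies t ≤ μ·(jᵀNj) ≤ (1-β)/(-β) for any {1}-inverse N of A_G + μI. -/
/-!
With `μ = (1 - β) / (α - β)`, the matrix `(α - β) (A_G + μ I)` is the Gram matrix of the code
plus `-β J`. Hence `M = A_G + μ I` is positive semidefinite and every vector of its kernel is
orthogonal to `j`, so `M w = j` is solvable and `jᵀ N j = jᵀ w =: s` for every `{1}`-inverse `N`.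
Evaluating the Gram decomposition at `w` gives `-β s² ≤ (α - β) s`, the upper bound. For an
independent set `S` with indicator `x` we have `xᵀ M x = μ |S|` and `xᵀ M w = |S|`, and
`0 ≤ (x - μ w)ᵀ M (x - μ w)` gives `|S| ≤ μ s`.
-/

open Matrix

noncomputable section

/-- The real inner product on `ℝ^d`. -/
def rinner {d : ℕ} (x y : EuclideanSpace ℝ (Fin d)) : ℝ := inner ℝ x y

lemma rinner_comm {d : ℕ} (x y : EuclideanSpace ℝ (Fin d)) : rinner x y = rinner y x :=
  real_inner_comm y x

/-- A spherical `{α, β}`-code in `ℝ^d`: a family of unit vectors whose pairwise inner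
products of distinct vectors lie in `{α, β}`. -/
def IsSphericalCode (α β : ℝ) {d n : ℕ} (u : Fin n → EuclideanSpace ℝ (Fin d)) : Prop :=
  (∀ i, ‖u i‖ = 1) ∧ ∀ i j, i ≠ j → rinner (u i) (u j) = α ∨ rinner (u i) (u j) = β

/-- Adjacency matrix of the associated `α`-graph `Γ_α(S)`. -/
def alphaAdj (α : ℝ) {d n : ℕ} (u : Fin n → EuclideanSpace ℝ (Fin d)) :
    Matrix (Fin n) (Fin n) ℝ :=
  Matrix.of fun i j => if i ≠ j ∧ rinner (u i) (u j) = α then 1 else 0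

/-- The associated `α`-graph `Γ_α(S)` of a family of vectors: distinct vectors are
adjacent iff their inner product is `α`. -/
def alphaGraph (α : ℝ) {d n : ℕ} (u : Fin n → EuclideanSpace ℝ (Fin d)) :
    SimpleGraph (Fin n) where
  Adj i j := i ≠ j ∧ rinner (u i) (u j) = α
  symm := ⟨fun i j h => ⟨h.1.symm, by rw [rinner_comm]; exact h.2⟩⟩
  loopless := ⟨fun i h => h.1 rfl⟩

open scoped Finset

namespace Matrix

variable {ι : Type*} [Fintype ι]

theorem IsSymm.dotProduct_mulVec_eq_of_mul_mul_self {R : Type*} [CommSemiring R]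
    {M N : Matrix ι ι R} (hM : M.IsSymm) (hN : M * N * M = M) {w y : ι → R}
    (hw : M *ᵥ w = y) : y ⬝ᵥ N *ᵥ y = y ⬝ᵥ w := by
  have hadj : ∀ z, (M *ᵥ w) ⬝ᵥ z = w ⬝ᵥ M *ᵥ z := fun z => by
    rw [dotProduct_mulVec, ← mulVec_transpose, hM.eq]
  rw [← hw, hadj, mulVec_mulVec, mulVec_mulVec, hN, dotProduct_comm]

theorem IsHermitian.exists_mulVec_eq [DecidableEq ι] {M : Matrix ι ι ℝ} (hM : M.IsHermitian)
    {y : ι → ℝ} (hy : ∀ v, M *ᵥ v = 0 → y ⬝ᵥ v = 0) : ∃ w, M *ᵥ w = y := by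
  have hT := isSymmetric_toEuclideanLin_iff.mpr hM
  have hmem : WithLp.toLp 2 y ∈ LinearMap.range M.toEuclideanLin := by
    rw [← Submodule.orthogonal_orthogonal (LinearMap.range _), hT.orthogonal_range,
      Submodule.mem_orthogonal]
    intro v hv
    have := hy v.ofLp (by simpa [Matrix.toLpLin_apply] using congrArg WithLp.ofLp hv)
    simpa [EuclideanSpace.inner_eq_star_dotProduct, dotProduct_comm] using this
  obtain ⟨w, hw⟩ := hmem
  exact ⟨w.ofLp, by simpa [Matrix.toLpLin_apply] using congrArg WithLp.ofLp hw⟩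

theorem PosSemidef.two_mul_dotProduct_mulVec_le {M : Matrix ι ι ℝ} (hM : M.PosSemidef)
    (x w : ι → ℝ) (c : ℝ) :
    2 * c * (x ⬝ᵥ M *ᵥ w) ≤ x ⬝ᵥ M *ᵥ x + c ^ 2 * (w ⬝ᵥ M *ᵥ w) := by
  have hsymm : w ⬝ᵥ M *ᵥ x = x ⬝ᵥ M *ᵥ w := by
    rw [dotProduct_mulVec, ← mulVec_transpose, ← conjTranspose_eq_transpose_of_trivial,
      hM.isHermitian.eq, dotProduct_comm]
  have := hM.dotProduct_mulVec_nonneg (x - c • w)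
  simp only [star_trivial, mulVec_sub, mulVec_smul, sub_dotProduct, dotProduct_sub,
    smul_dotProduct, dotProduct_smul, smul_eq_mul, hsymm] at this
  nlinarith

end Matrix

theorem SimpleGraph.IsIndepSet.indicator_dotProduct_adjMatrix_mulVec {V R : Type*} [Fintype V]
    [NonAssocSemiring R] {G : SimpleGraph V} [DecidableRel G.Adj] {s : Set V}
    (hs : G.IsIndepSet s) : s.indicator 1 ⬝ᵥ G.adjMatrix R *ᵥ s.indicator (1 : V → R) = 0 := by
  classical
  refine Finset.sum_eq_zero fun v _ => ?_
  by_cases hv : v ∈ s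
  · rw [adjMatrix_mulVec_apply, Finset.sum_eq_zero, mul_zero]
    intro w hw
    have hvw := (G.mem_neighborFinset v w).1 hw
    exact Set.indicator_of_notMem (fun hws => hs hv hws hvw.ne hvw) _
  · simp [hv]

section SphericalCode

variable {α β : ℝ} {d n : ℕ} {u : Fin n → EuclideanSpace ℝ (Fin d)}

theorem alphaAdj_eq_adjMatrix (α : ℝ) (u : Fin n → EuclideanSpace ℝ (Fin d))
    [DecidableRel (alphaGraph α u).Adj] : alphaAdj α u = (alphaGraph α u).adjMatrix ℝ := by
  ext i j
  rw [SimpleGraph.adjMatrix_apply, alphaAdj, of_apply]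
  exact if_congr Iff.rfl rfl rfl

theorem smul_alphaAdj_add_smul_one (hu : IsSphericalCode α β u) (hαβ : α ≠ β) :
    (α - β) • (alphaAdj α u + ((1 - β) / (α - β)) • 1) = gram ℝ u + (-β) • vecMulVec 1 1 := by
  have hαβ' : α - β ≠ 0 := sub_ne_zero.2 hαβ
  ext i j
  by_cases hij : i = j
  · subst hij
    simp [alphaAdj, hu.1 i]
    field_simp
    ring
  · rcases hu.2 i j hij with h | h <;> simp_all [alphaAdj, rinner, Ne.symm hαβ, sub_eq_add_neg]

theorem smul_dotProduct_alphaAdj_add_smul_one_mulVec (hu : IsSphericalCode α β u) (hαβ : α ≠ β)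
    (x : Fin n → ℝ) :
    (α - β) * (x ⬝ᵥ (alphaAdj α u + ((1 - β) / (α - β)) • 1) *ᵥ x) =
      ‖∑ i, x i • u i‖ ^ 2 + (-β) * (∑ i, x i) ^ 2 := by
  have hgram : x ⬝ᵥ gram ℝ u *ᵥ x = ‖∑ i, x i • u i‖ ^ 2 := by
    simpa [real_inner_self_eq_norm_sq] using star_dotProduct_gram_mulVec (𝕜 := ℝ) u x x
  rw [← smul_eq_mul, ← dotProduct_smul, ← smul_mulVec, smul_alphaAdj_add_smul_one hu hαβ,
    add_mulVec, dotProduct_add, hgram, smul_mulVec, dotProduct_smul, vecMulVec_mulVec]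
  simp [one_dotProduct, dotProduct_one, sq]

theorem posSemidef_alphaAdj_add_smul_one (hu : IsSphericalCode α β u) (hβα : β < α)
    (hβ : β ≤ 0) : (alphaAdj α u + ((1 - β) / (α - β)) • 1).PosSemidef := by
  have hαβ : 0 < α - β := sub_pos.2 hβα
  rw [← inv_smul_smul₀ hαβ.ne' (alphaAdj α u + _), smul_alphaAdj_add_smul_one hu hβα.ne']
  exact ((posSemidef_gram ℝ u).add ((posSemidef_vecMulVec_self_star 1).smul (by linarith))).smul
    (inv_nonneg.2 hαβ.le)

theorem exists_alphaAdj_add_smul_one_mulVec_eq_one (hu : IsSphericalCode α β u) (hβα : β < α)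
    (hβ : β < 0) : ∃ w, (alphaAdj α u + ((1 - β) / (α - β)) • 1) *ᵥ w = 1 := by
  refine (posSemidef_alphaAdj_add_smul_one hu hβα hβ.le).isHermitian.exists_mulVec_eq
    fun v hv => ?_
  have hform := smul_dotProduct_alphaAdj_add_smul_one_mulVec hu hβα.ne' v
  rw [hv, dotProduct_zero, mul_zero] at hform
  have hsum : (∑ i, v i) ^ 2 = 0 := by
    nlinarith [sq_nonneg ‖∑ i, v i • u i‖, sq_nonneg (∑ i, v i)]
  rw [one_dotProduct, pow_eq_zero_iff two_ne_zero |>.1 hsum]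

theorem sum_le_of_alphaAdj_add_smul_one_mulVec_eq_one (hu : IsSphericalCode α β u) (hβα : β < α)
    (hβ : β < 0) {w : Fin n → ℝ} (hw : (alphaAdj α u + ((1 - β) / (α - β)) • 1) *ᵥ w = 1) :
    ∑ i, w i ≤ (α - β) / (-β) := by
  have hform := smul_dotProduct_alphaAdj_add_smul_one_mulVec hu hβα.ne' w
  rw [hw, dotProduct_one] at hform
  rw [le_div_iff₀ (neg_pos.2 hβ)]
  by_contra! h
  nlinarith [sq_nonneg ‖∑ i, w i • u i‖]

theorem card_le_of_isIndepSet_alphaGraph (hu : IsSphericalCode α β u) (hβα : β < α) (hβ : β ≤ 0)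
    {S : Finset (Fin n)} (hS : (alphaGraph α u).IsIndepSet S) {w : Fin n → ℝ}
    (hw : (alphaAdj α u + ((1 - β) / (α - β)) • 1) *ᵥ w = 1) :
    (#S : ℝ) ≤ (1 - β) / (α - β) * ∑ i, w i := by
  classical
  set μ := (1 - β) / (α - β)
  have hμ : 0 < μ := div_pos (by linarith) (by linarith)
  set x : Fin n → ℝ := (S : Set (Fin n)).indicator 1
  have hx : x ⬝ᵥ x = #S ∧ x ⬝ᵥ 1 = #S := by
    constructor <;> simp [x, dotProduct, Set.indicator_apply]
  have hxx : x ⬝ᵥ (alphaAdj α u + μ • 1) *ᵥ x = μ * #S := by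
    rw [add_mulVec, dotProduct_add, alphaAdj_eq_adjMatrix,
      hS.indicator_dotProduct_adjMatrix_mulVec, smul_mulVec, one_mulVec, dotProduct_smul, hx.1,
      zero_add, smul_eq_mul]
  have hxw : x ⬝ᵥ (alphaAdj α u + μ • 1) *ᵥ w = #S := by rw [hw, hx.2]
  have hww : w ⬝ᵥ (alphaAdj α u + μ • 1) *ᵥ w = ∑ i, w i := by rw [hw, dotProduct_one]
  have := (posSemidef_alphaAdj_add_smul_one hu hβα hβ).two_mul_dotProduct_mulVec_le x w μ
  rw [hxx, hxw, hww] at this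
  nlinarith

end SphericalCode

theorem stmt4_general (d n : ℕ)
    (α β μ : ℝ) (hβα : β < α) (hβ₀ : β < 0)
    (hμ : μ = (1 - β) / (α - β))
    (u : Fin n → EuclideanSpace ℝ (Fin d)) (hu : IsSphericalCode α β u)
    (t : ℕ) (ht : t = ((alphaGraph α u)ᶜ).cliqueNum)
    (N : Matrix (Fin n) (Fin n) ℝ)
    (hN : (alphaAdj α u + μ • (1 : Matrix (Fin n) (Fin n) ℝ)) * N *
        (alphaAdj α u + μ • 1) = alphaAdj α u + μ • 1) :
    (t : ℝ) ≤ μ * ((fun _ => (1 : ℝ)) ⬝ᵥ (N *ᵥ fun _ => 1)) ∧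
    μ * ((fun _ => (1 : ℝ)) ⬝ᵥ (N *ᵥ fun _ => 1)) ≤ (1 - β) / (-β) := by
  subst hμ ht
  have hsymm : (alphaAdj α u + ((1 - β) / (α - β)) • 1).IsSymm := by
    rw [IsSymm, ← conjTranspose_eq_transpose_of_trivial]
    exact (posSemidef_alphaAdj_add_smul_one hu hβα hβ₀.le).isHermitian
  obtain ⟨w, hw⟩ := exists_alphaAdj_add_smul_one_mulVec_eq_one hu hβα hβ₀
  obtain ⟨S, hS⟩ := ((alphaGraph α u)ᶜ).exists_isNClique_cliqueNum
  have hjNj : (1 : Fin n → ℝ) ⬝ᵥ N *ᵥ 1 = ∑ i, w i := by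
    rw [hsymm.dotProduct_mulVec_eq_of_mul_mul_self hN hw, one_dotProduct]
  refine ⟨?_, ?_⟩
  · rw [← hS.card_eq]
    exact hjNj ▸ card_le_of_isIndepSet_alphaGraph hu hβα hβ₀.le
      ((SimpleGraph.isClique_compl _).1 hS.isClique) hw
  · have hμ : 0 ≤ (1 - β) / (α - β) := div_nonneg (by linarith) (by linarith)
    calc (1 - β) / (α - β) * ((1 : Fin n → ℝ) ⬝ᵥ N *ᵥ 1)
        ≤ (1 - β) / (α - β) * ((α - β) / (-β)) :=
          hjNj ▸ mul_le_mul_of_nonneg_left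
            (sum_le_of_alphaAdj_add_smul_one_mulVec_eq_one hu hβα hβ₀ hw) hμ
      _ = (1 - β) / (-β) := by field_simp [(sub_pos.2 hβα).ne']

/-- the independence number `t` of the `α`-graph `G` of a spherical
`{α,β}`-code (i.e. the clique number of the complement of `G`) satisfies
`t ≤ μ·jᵀNj ≤ (1-β)/(-β)` for any `{1}`-inverse `N` of `A_G + μI`. -/
theorem stmt4 (d n : ℕ)
    (α β μ : ℝ) (hβ₁ : -1 ≤ β) (hβα : β < α) (hα : α < 1) (hβ₀ : β < 0)
    (hμ : μ = (1 - β) / (α - β))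
    (u : Fin n → EuclideanSpace ℝ (Fin d)) (hu : IsSphericalCode α β u)
    (t : ℕ) (ht : t = ((alphaGraph α u)ᶜ).cliqueNum)
    (N : Matrix (Fin n) (Fin n) ℝ)
    (hN : (alphaAdj α u + μ • (1 : Matrix (Fin n) (Fin n) ℝ)) * N *
        (alphaAdj α u + μ • 1) = alphaAdj α u + μ • 1) :
    (t : ℝ) ≤ μ * ((fun _ => (1 : ℝ)) ⬝ᵥ (N *ᵥ fun _ => 1)) ∧
    μ * ((fun _ => (1 : ℝ)) ⬝ᵥ (N *ᵥ fun _ => 1)) ≤ (1 - β) / (-β) :=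
  stmt4_general d n α β μ hβα hβ₀ hμ u hu t ht N hN
end
end

section
/- Let -1 ≤ β < α < 1 with β < 0, and set μ = (1-β)/(α-β). Let G be the associated α-graph of a spherical {α,β}-code, with adjacency matrix A_G. For any vertex u of G, let H = G - N_G[u] be the subgraph of G induced by the vertices outside the closed neighborhood N_G[u] = N_G(u) ∪ {u}. Then the all-ones vector j lies in the column space of A_H + μI, for every {1}-inverse N of A_H + μI one has jᵀNj ≤ (α-β)/(-β(1-β)), and rank(A_H + μI) ≤ rank(A_G + μI) - 1. -/
/-!
Lift every code vector `u i` to `(u i, √(-β)) ∈ ℝ^(d+1)`. The Gram matrix of the lifts is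
`(α - β)(A_G + μI)`, and that of the lifts of the vertices of `H` is `(α - β)(A_H + μI)`, so ranks
and column spaces can be read off the lifts. Every vertex of `H` has inner product `β` with `u v`,
so the lift of `v` is orthogonal to the lifts of `H` (this drops the rank by one), and
`p = (u v, √(-β)/β)` pairs to `β - 1` with each of them, which puts `j` in the column space. For a
`{1}`-inverse `N` and `(A_H + μI)x = j` one has `jᵀNj = ∑ xᵢ`, and Cauchy–Schwarz against `p`
bounds this sum.
-/

open Matrix

noncomputable section

namespace Matrix

variable {k m n : Type*} [Fintype k] [Fintype m] [Fintype n]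

theorem dotProduct_mulVec_of_mul_mul_eq_self {R : Type*} [CommSemiring R] {M N : Matrix m m R}
    (hM : Mᵀ = M) (hN : M * N * M = M) {x y : m → R} (hx : M *ᵥ x = y) :
    y ⬝ᵥ (N *ᵥ y) = x ⬝ᵥ y :=
  calc y ⬝ᵥ (N *ᵥ y) = (M *ᵥ x) ⬝ᵥ ((N * M) *ᵥ x) := by rw [← hx, mulVec_mulVec]
    _ = x ⬝ᵥ ((Mᵀ * (N * M)) *ᵥ x) := by
      rw [dotProduct_comm, dotProduct_mulVec, ← mulVec_transpose, dotProduct_comm, mulVec_mulVec]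
    _ = x ⬝ᵥ y := by rw [hM, ← Matrix.mul_assoc, hN, hx]

section Field

variable {R : Type*} [Field R]

theorem rank_submatrix_lt_of_transpose_mul_self {X : Matrix k n R} (f : m → n) (v : n)
    (horth : ∀ i, (Xᵀ * X) v (f i) = 0) (hv : (Xᵀ * X) v v ≠ 0) :
    (X.submatrix id f).rank < X.rank := by
  rw [rank_eq_finrank_span_cols, rank_eq_finrank_span_cols]
  apply Submodule.finrank_lt_finrank_of_lt
  rw [SetLike.lt_iff_le_and_exists]
  refine ⟨Submodule.span_mono ?_, X.col v, Submodule.subset_span ⟨v, rfl⟩, fun hmem => hv ?_⟩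
  · rintro _ ⟨i, rfl⟩
    exact ⟨f i, rfl⟩
  obtain ⟨c, hc⟩ := (Submodule.mem_span_range_iff_exists_fun R).1 hmem
  calc (Xᵀ * X) v v = X.col v ⬝ᵥ X.col v := rfl
    _ = X.col v ⬝ᵥ ∑ i, c i • X.col (f i) := congrArg (X.col v ⬝ᵥ ·) hc.symm
    _ = ∑ i, c i * (Xᵀ * X) v (f i) := by
      simp only [dotProduct_sum, dotProduct_smul, smul_eq_mul]
      rfl
    _ = 0 := by simp [horth]

variable [LinearOrder R] [IsStrictOrderedRing R]

theorem rank_eq_of_smul_eq_transpose_mul_self {A : Matrix m m R} {B : Matrix k m R} {c : R}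
    (hc : c ≠ 0) (h : c • A = Bᵀ * B) : A.rank = B.rank := by
  rw [← rank_smul_of_mem_nonZeroDivisors A (mem_nonZeroDivisors_of_ne_zero hc), h,
    rank_transpose_mul_self]

theorem range_mulVecLin_transpose_mul_self (Z : Matrix k m R) :
    LinearMap.range (Zᵀ * Z).mulVecLin = LinearMap.range Zᵀ.mulVecLin := by
  apply Submodule.eq_of_le_of_finrank_le
  · rintro y ⟨x, rfl⟩
    exact ⟨Z *ᵥ x, by simp⟩
  · change Zᵀ.rank ≤ (Zᵀ * Z).rank
    rw [rank_transpose_mul_self, rank_transpose]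

theorem exists_transpose_mul_self_mulVec_eq_const {Z : Matrix k m R} {p : k → R} {a : R}
    (ha : a ≠ 0) (hp : Zᵀ *ᵥ p = fun _ => a) (c : R) :
    ∃ x, (Zᵀ * Z) *ᵥ x = fun _ => c := by
  have : Zᵀ *ᵥ ((c / a) • p) ∈ LinearMap.range (Zᵀ * Z).mulVecLin := by
    rw [range_mulVecLin_transpose_mul_self]
    exact ⟨_, rfl⟩
  obtain ⟨x, hx⟩ := this
  refine ⟨x, hx.trans ?_⟩
  ext
  simp [mulVec_smul, hp, ha]

theorem sum_le_of_transpose_mul_self_mulVec_eq_const {Z : Matrix k m R} {p : k → R} {a c : R}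
    (ha : a ≠ 0) (hc : 0 < c) (hp : Zᵀ *ᵥ p = fun _ => a) {x : m → R}
    (hx : (Zᵀ * Z) *ᵥ x = fun _ => c) :
    ∑ i, x i ≤ (p ⬝ᵥ p) * c / a ^ 2 := by
  set w := Z *ᵥ x
  have hww : w ⬝ᵥ w = c * ∑ i, x i := by
    rw [dotProduct_mulVec, ← mulVec_transpose, mulVec_mulVec, hx]
    simp [dotProduct, Finset.mul_sum]
  have hpw : p ⬝ᵥ w = a * ∑ i, x i := by
    rw [dotProduct_mulVec, ← mulVec_transpose, hp]
    simp [dotProduct, Finset.mul_sum]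
  have hcs : (p ⬝ᵥ w) ^ 2 ≤ (p ⬝ᵥ p) * (w ⬝ᵥ w) := by
    simpa only [dotProduct, sq] using Finset.sum_mul_sq_le_sq_mul_sq Finset.univ p w
  have hsum : 0 ≤ ∑ i, x i := by
    have : 0 ≤ w ⬝ᵥ w := Finset.sum_nonneg fun i _ => mul_self_nonneg (w i)
    nlinarith
  have hpp : 0 ≤ p ⬝ᵥ p := Finset.sum_nonneg fun i _ => mul_self_nonneg (p i)
  rw [hww, hpw] at hcs
  rw [le_div_iff₀ (by positivity)]
  rcases hsum.eq_or_lt with h | h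
  · rw [← h, zero_mul]
    positivity
  · nlinarith

end Field

end Matrix

section SphericalCode

variable {d n : ℕ} {α β : ℝ} {u : Fin n → EuclideanSpace ℝ (Fin d)} {m : Type*}
  {f : m → Fin n}

def liftedCode (β : ℝ) (u : Fin n → EuclideanSpace ℝ (Fin d)) : Matrix (Fin d ⊕ Unit) (Fin n) ℝ :=
  of fun a i => Sum.elim (u i) (fun _ => √(-β)) a

lemma rinner_eq_sum (x y : EuclideanSpace ℝ (Fin d)) : rinner x y = ∑ a, x a * y a := by
  simp [rinner, PiLp.inner_apply, mul_comm]

lemma transpose_mul_liftedCode_apply (hβ : β ≤ 0) (i k : Fin n) :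
    ((liftedCode β u)ᵀ * liftedCode β u) i k = rinner (u i) (u k) - β := by
  simp [liftedCode, mul_apply, Fintype.sum_sum_type, rinner_eq_sum,
    Real.mul_self_sqrt (neg_nonneg.2 hβ)]
  ring

lemma transpose_liftedCode_mulVec_apply (hβ : β < 0) (x : EuclideanSpace ℝ (Fin d)) (i : Fin n) :
    ((liftedCode β u)ᵀ *ᵥ Sum.elim x (fun _ => √(-β) / β)) i = rinner (u i) x - 1 := by
  have : √(-β) * (√(-β) / β) = -1 := by
    rw [← mul_div_assoc, Real.mul_self_sqrt (by linarith), neg_div, div_self hβ.ne]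
  simp [liftedCode, mulVec, dotProduct, Fintype.sum_sum_type, rinner_eq_sum, this]
  ring

lemma dotProduct_self_sum_elim (hβ : β < 0) (x : EuclideanSpace ℝ (Fin d)) :
    Sum.elim x (fun _ : Unit => √(-β) / β) ⬝ᵥ Sum.elim x (fun _ => √(-β) / β) =
      rinner x x - 1 / β := by
  have : √(-β) / β * (√(-β) / β) = -(1 / β) := by
    rw [div_mul_div_comm, Real.mul_self_sqrt (by linarith)]
    field_simp
  simp [dotProduct, Fintype.sum_sum_type, this, rinner_eq_sum]
  ring

lemma IsSphericalCode.rinner_self (hu : IsSphericalCode α β u) (i : Fin n) :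
    rinner (u i) (u i) = 1 := by
  rw [rinner, real_inner_self_eq_norm_sq, hu.1 i, one_pow]

lemma IsSphericalCode.rinner_eq_of_mem_compl (hu : IsSphericalCode α β u) {v i : Fin n}
    (hi : i ∈ ((alphaGraph α u).neighborSet v ∪ {v})ᶜ) : rinner (u i) (u v) = β := by
  simp only [Set.mem_compl_iff, Set.mem_union, SimpleGraph.mem_neighborSet, Set.mem_singleton_iff,
    not_or] at hi
  rw [rinner_comm]
  exact (hu.2 v i (Ne.symm hi.2)).resolve_left fun h => hi.1 ⟨Ne.symm hi.2, h⟩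

lemma IsSphericalCode.smul_submatrix_alphaAdj_add_smul_one (hu : IsSphericalCode α β u)
    (hβ : β ≤ 0) {μ : ℝ} (hμ : (α - β) * μ = 1 - β) [DecidableEq m] (hf : Function.Injective f) :
    (α - β) • ((alphaAdj α u).submatrix f f + μ • 1) =
      ((liftedCode β u).submatrix id f)ᵀ * (liftedCode β u).submatrix id f := by
  ext i k
  change _ = ((liftedCode β u)ᵀ * liftedCode β u) (f i) (f k)
  rw [transpose_mul_liftedCode_apply hβ]
  rcases eq_or_ne i k with rfl | hik
  · simp [alphaAdj, hu.rinner_self, hμ]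
  · have hfik : f i ≠ f k := hf.ne hik
    rcases hu.2 _ _ hfik with h | h <;> by_cases hαβ : β = α <;>
      simp [alphaAdj, hik, hfik, h, hαβ]

lemma transpose_submatrix_liftedCode_mulVec (hβ : β < 0) {y : EuclideanSpace ℝ (Fin d)}
    (hf : ∀ i, rinner (u (f i)) y = β) :
    ((liftedCode β u).submatrix id f)ᵀ *ᵥ Sum.elim y (fun _ => √(-β) / β) = fun _ => β - 1 :=
  funext fun i => (transpose_liftedCode_mulVec_apply hβ y (f i)).trans (congrArg (· - 1) (hf i))

lemma sum_le_of_transpose_mul_submatrix_liftedCode_mulVec [Fintype m] (hβα : β < α) (hβ : β < 0)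
    {y : EuclideanSpace ℝ (Fin d)} (hy : rinner y y = 1) (hf : ∀ i, rinner (u (f i)) y = β)
    {x : m → ℝ}
    (hx : (((liftedCode β u).submatrix id f)ᵀ * (liftedCode β u).submatrix id f) *ᵥ x =
      fun _ => α - β) :
    ∑ i, x i ≤ (α - β) / (-β * (1 - β)) := by
  have h1β : 1 - β ≠ 0 := by linarith
  have hβ1 : β - 1 ≠ 0 := by linarith
  calc ∑ i, x i ≤ (α - β) * (rinner y y - 1 / β) / (β - 1) ^ 2 := by
        rw [← dotProduct_self_sum_elim hβ, mul_comm (α - β)]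
        exact sum_le_of_transpose_mul_self_mulVec_eq_const hβ1 (by linarith)
          (transpose_submatrix_liftedCode_mulVec hβ hf) hx
    _ = (α - β) / (-β * (1 - β)) := by
      rw [hy]
      field_simp [hβ.ne]
      ring

lemma rank_submatrix_liftedCode_lt [Fintype m] (hβ : β ≤ 0) {v : Fin n}
    (hv : rinner (u v) (u v) = 1) (hf : ∀ i, rinner (u (f i)) (u v) = β) :
    ((liftedCode β u).submatrix id f).rank < (liftedCode β u).rank := by
  refine rank_submatrix_lt_of_transpose_mul_self f v (fun i => ?_) ?_
  · rw [transpose_mul_liftedCode_apply hβ, rinner_comm, hf i, sub_self]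
  · rw [transpose_mul_liftedCode_apply hβ, hv]
    linarith

end SphericalCode

open scoped Classical

theorem stmt7_general (d n : ℕ)
    (α β μ : ℝ) (hβα : β < α) (hβ₀ : β < 0)
    (hμ : μ = (1 - β) / (α - β))
    (u : Fin n → EuclideanSpace ℝ (Fin d)) (hu : IsSphericalCode α β u)
    (v : Fin n)
    (M : Matrix ↥(((alphaGraph α u).neighborSet v ∪ {v})ᶜ)
        ↥(((alphaGraph α u).neighborSet v ∪ {v})ᶜ) ℝ)
    (hM : M = (alphaAdj α u).submatrix Subtype.val Subtype.val + μ • 1) :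
    (∃ x, M *ᵥ x = fun _ => 1) ∧
    (∀ N, M * N * M = M →
      (fun _ => (1 : ℝ)) ⬝ᵥ (N *ᵥ fun _ => 1) ≤ (α - β) / (-β * (1 - β))) ∧
    (M.rank : ℤ) ≤ ((alphaAdj α u + μ • (1 : Matrix (Fin n) (Fin n) ℝ)).rank : ℤ) - 1 := by
  have hαβ : α - β ≠ 0 := by linarith
  have hμ' : (α - β) * μ = 1 - β := by rw [hμ]; field_simp
  have hs : ∀ i : ↥((alphaGraph α u).neighborSet v ∪ {v})ᶜ, rinner (u i) (u v) = β :=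
    fun i => hu.rinner_eq_of_mem_compl i.2
  set L := liftedCode β u
  set Z := L.submatrix id Subtype.val
  have hG : (α - β) • (alphaAdj α u + μ • 1) = Lᵀ * L := by
    simpa using hu.smul_submatrix_alphaAdj_add_smul_one hβ₀.le hμ' Function.injective_id
  have hZ : (α - β) • M = Zᵀ * Z :=
    hM ▸ hu.smul_submatrix_alphaAdj_add_smul_one hβ₀.le hμ' Subtype.val_injective
  have hMZ : M = (α - β)⁻¹ • (Zᵀ * Z) := by rw [← hZ, smul_smul, inv_mul_cancel₀ hαβ, one_smul]
  obtain ⟨x, hx⟩ := exists_transpose_mul_self_mulVec_eq_const (by linarith)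
    (transpose_submatrix_liftedCode_mulVec hβ₀ hs) (α - β)
  have hMx : M *ᵥ x = fun _ => 1 := by
    rw [hMZ, smul_mulVec, hx]
    ext
    simp [hαβ]
  refine ⟨⟨x, hMx⟩, fun N hN => ?_, ?_⟩
  · have hMt : Mᵀ = M := by rw [hMZ, transpose_smul, transpose_mul, transpose_transpose]
    rw [dotProduct_mulVec_of_mul_mul_eq_self hMt hN hMx]
    simp only [dotProduct, mul_one]
    exact sum_le_of_transpose_mul_submatrix_liftedCode_mulVec hβα hβ₀ (hu.rinner_self v) hs hx
  · have hlt : Z.rank < L.rank := rank_submatrix_liftedCode_lt hβ₀.le (hu.rinner_self v) hs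
    rw [rank_eq_of_smul_eq_transpose_mul_self hαβ hZ, rank_eq_of_smul_eq_transpose_mul_self hαβ hG]
    omega

/-- for the `α`-graph `G` of a spherical `{α,β}`-code and any vertex `v`,
the subgraph `H = G - N_G[v]` induced by the complement of the closed neighborhood of `v`
satisfies: `j` lies in the column space of `A_H + μI`, `jᵀNj ≤ (α-β)/(-β(1-β))` for any
`{1}`-inverse `N`, and `rank(A_H + μI) ≤ rank(A_G + μI) - 1`. -/
theorem stmt7 (d n : ℕ)
    (α β μ : ℝ) (hβ₁ : -1 ≤ β) (hβα : β < α) (hα : α < 1) (hβ₀ : β < 0)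
    (hμ : μ = (1 - β) / (α - β))
    (u : Fin n → EuclideanSpace ℝ (Fin d)) (hu : IsSphericalCode α β u)
    (v : Fin n)
    (M : Matrix ↥(((alphaGraph α u).neighborSet v ∪ {v})ᶜ)
        ↥(((alphaGraph α u).neighborSet v ∪ {v})ᶜ) ℝ)
    (hM : M = (alphaAdj α u).submatrix Subtype.val Subtype.val + μ • 1) :
    (∃ x, M *ᵥ x = fun _ => 1) ∧
    (∀ N, M * N * M = M →
      (fun _ => (1 : ℝ)) ⬝ᵥ (N *ᵥ fun _ => 1) ≤ (α - β) / (-β * (1 - β))) ∧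
    (M.rank : ℤ) ≤ ((alphaAdj α u + μ • (1 : Matrix (Fin n) (Fin n) ℝ)).rank : ℤ) - 1 :=
  stmt7_general d n α β μ hβα hβ₀ hμ u hu v M hM
end
end

section
/- Let -1 ≤ β < α < 1 with α > 0, and set λ = (1-α)/(α-β). Let S be a spherical {α,β}-code in ℝ^d of size n and rank r, and let A be the adjacency matrix of the associated β-graph Γ_β(S). Then the matrix λI - A has at most one negative eigenvalue (equivalently, the second largest eigenvalue of Γ_β(S) is at most λ). Moreover: if λI - A is positive definite (all eigenvalues of Γ_β(S) are < λ) then n = r; and if λI - A is positive semidefinite but singular (the largest eigenvalue of Γ_β(S) equals λ) then rank(λI - A) = r - 1. -/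
/-!
Let `G` be the Gram matrix of the code and `J` the all-ones matrix. Comparing entries gives
`G = (α - β) (λI - A) + α J`. Since `G` is positive semidefinite, the quadratic form of `λI - A`
is nonnegative on the hyperplane `1ᗮ`, so it has at most one negative eigenvalue; and if `λI - A`
is positive definite then so is `G`, whose rank is `r`. If `λI - A` is positive semidefinite, a
vector is in `ker G` iff it is in `ker (λI - A)` and orthogonal to `1`. When moreover `λI - A` is
singular, the entrywise absolute value of a kernel vector is again in the kernel, because the
off-diagonal entries of `λI - A` are nonpositive; this nonnegative vector is not orthogonal to
`1`, so `ker G` has codimension one in `ker (λI - A)`, i.e. `rank (λI - A) = r - 1`.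
-/

open Matrix

noncomputable section

/-- Adjacency matrix of the associated `β`-graph `Γ_β(S)`. -/
def betaAdj (β : ℝ) {d n : ℕ} (u : Fin n → EuclideanSpace ℝ (Fin d)) :
    Matrix (Fin n) (Fin n) ℝ :=
  Matrix.of fun i j => if i ≠ j ∧ rinner (u i) (u j) = β then 1 else 0

theorem Submodule.finrank_inf_ker_add_one {K V : Type*} [Field K] [AddCommGroup V] [Module K V]
    [FiniteDimensional K V] (p : Submodule K V) (f : Module.Dual K V) {w : V} (hw : w ∈ p)
    (hfw : f w ≠ 0) : Module.finrank K ↥(p ⊓ LinearMap.ker f) + 1 = Module.finrank K p := by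
  have hf : f.domRestrict p ≠ 0 := fun h => hfw (by simpa using LinearMap.congr_fun h ⟨w, hw⟩)
  rw [← Module.Dual.finrank_ker_add_one_of_ne_zero hf, LinearMap.ker_domRestrict,
    ← (Submodule.comapSubtypeEquivOfLe inf_le_left).finrank_eq, Submodule.comap_inf,
    Submodule.comap_subtype_self, top_inf_eq]

namespace Matrix

variable {ι : Type*} [Fintype ι]

theorem rank_gram {E : Type*} [NormedAddCommGroup E] [InnerProductSpace ℝ E] (v : ι → E) :
    (gram ℝ v).rank = Module.finrank ℝ (Submodule.span ℝ (Set.range v)) := by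
  have hker :
      LinearMap.ker (gram ℝ v).mulVecLin = LinearMap.ker (Fintype.linearCombination ℝ v) := by
    ext x
    have hq := star_dotProduct_gram_mulVec (𝕜 := ℝ) v x x
    rw [LinearMap.mem_ker, LinearMap.mem_ker, mulVecLin_apply,
      ← (posSemidef_gram ℝ v).dotProduct_mulVec_zero_iff, hq, Fintype.linearCombination_apply,
      inner_self_eq_zero]
  have h₁ := (gram ℝ v).mulVecLin.finrank_range_add_finrank_ker
  have h₂ := (Fintype.linearCombination ℝ v).finrank_range_add_finrank_ker
  rw [hker] at h₁
  rw [Fintype.range_linearCombination] at h₂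
  rw [Matrix.rank]
  omega

theorem PosSemidef.mulVec_abs_eq_zero {M : Matrix ι ι ℝ} (hM : M.PosSemidef)
    (hoff : ∀ i j, i ≠ j → M i j ≤ 0) {z : ι → ℝ} (hz : M *ᵥ z = 0) : M *ᵥ |z| = 0 := by
  have hle : |z| ⬝ᵥ M *ᵥ |z| ≤ z ⬝ᵥ M *ᵥ z := by
    simp only [dotProduct, mulVec, Finset.mul_sum, Pi.abs_apply]
    refine Finset.sum_le_sum fun i _ => Finset.sum_le_sum fun j _ => ?_
    rcases eq_or_ne i j with rfl | hij
    · nlinarith [congrArg (M i i * ·) (abs_mul_abs_self (z i))]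
    · nlinarith [hoff i j hij, abs_mul (z i) (z j), le_abs_self (z i * z j)]
  have hzero : |z| ⬝ᵥ M *ᵥ |z| = 0 :=
    le_antisymm (by simpa [hz] using hle) (by simpa using hM.dotProduct_mulVec_nonneg |z|)
  exact (hM.dotProduct_mulVec_zero_iff |z|).mp (by simpa using hzero)

section RankOnePerturbation

variable {M : Matrix ι ι ℝ} {a b : ℝ} {c : ι → ℝ}

theorem dotProduct_smul_add_smul_vecMulVec_mulVec (M : Matrix ι ι ℝ) (a b : ℝ) (c x : ι → ℝ) :
    x ⬝ᵥ (a • M + b • vecMulVec c c) *ᵥ x = a * (x ⬝ᵥ M *ᵥ x) + b * (c ⬝ᵥ x) ^ 2 := by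
  simp only [add_mulVec, smul_mulVec, vecMulVec_mulVec, dotProduct_add, dotProduct_smul,
    dotProduct_comm x c, MulOpposite.smul_eq_mul_unop, MulOpposite.unop_op, smul_eq_mul]
  ring

theorem PosSemidef.dotProduct_mulVec_nonneg_of_smul_add_smul_vecMulVec
    (hG : (a • M + b • vecMulVec c c).PosSemidef) (ha : 0 < a) {x : ι → ℝ} (hx : c ⬝ᵥ x = 0) :
    0 ≤ x ⬝ᵥ M *ᵥ x := by
  have hq := hG.dotProduct_mulVec_nonneg x
  rw [star_trivial, dotProduct_smul_add_smul_vecMulVec_mulVec, hx] at hq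
  nlinarith

theorem PosDef.smul_add_smul_vecMulVec (hM : M.PosDef) (ha : 0 < a) (hb : 0 ≤ b) (c : ι → ℝ) :
    (a • M + b • vecMulVec c c).PosDef := by
  simpa using (hM.smul ha).add_posSemidef ((posSemidef_vecMulVec_self_star c).smul hb)

theorem PosSemidef.mulVec_smul_add_smul_vecMulVec_eq_zero_iff (hM : M.PosSemidef) (ha : 0 < a)
    (hb : 0 < b) (x : ι → ℝ) :
    (a • M + b • vecMulVec c c) *ᵥ x = 0 ↔ M *ᵥ x = 0 ∧ c ⬝ᵥ x = 0 := by
  constructor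
  · intro hx
    have hq := dotProduct_smul_add_smul_vecMulVec_mulVec M a b c x
    rw [hx, dotProduct_zero] at hq
    have hMx := hM.dotProduct_mulVec_nonneg x
    rw [star_trivial] at hMx
    have hMq : x ⬝ᵥ M *ᵥ x = 0 := by nlinarith [sq_nonneg (c ⬝ᵥ x)]
    have hcx : (c ⬝ᵥ x) ^ 2 = 0 := by nlinarith
    exact ⟨(hM.dotProduct_mulVec_zero_iff x).mp (by rwa [star_trivial]),
      pow_eq_zero_iff two_ne_zero |>.mp hcx⟩
  · rintro ⟨hMx, hcx⟩
    simp [add_mulVec, smul_mulVec, vecMulVec_mulVec, hMx, hcx]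

theorem PosSemidef.rank_smul_add_smul_vecMulVec (hM : M.PosSemidef) (ha : 0 < a) (hb : 0 < b)
    {w : ι → ℝ} (hw : M *ᵥ w = 0) (hcw : c ⬝ᵥ w ≠ 0) :
    (a • M + b • vecMulVec c c).rank = M.rank + 1 := by
  have hker : LinearMap.ker (a • M + b • vecMulVec c c).mulVecLin =
      LinearMap.ker M.mulVecLin ⊓ LinearMap.ker (dotProductBilin ℝ ℝ c) := by
    ext x
    simpa only [LinearMap.mem_ker, mulVecLin_apply, Submodule.mem_inf,
      dotProductBilin_apply_apply] using
      hM.mulVec_smul_add_smul_vecMulVec_eq_zero_iff (c := c) ha hb x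
  have h₁ := (a • M + b • vecMulVec c c).mulVecLin.finrank_range_add_finrank_ker
  have h₂ := M.mulVecLin.finrank_range_add_finrank_ker
  have h₃ := (LinearMap.ker M.mulVecLin).finrank_inf_ker_add_one (dotProductBilin ℝ ℝ c)
    (LinearMap.mem_ker.mpr (by simpa using hw)) (by simpa using hcw)
  rw [hker] at h₁
  rw [Matrix.rank, Matrix.rank]
  omega

end RankOnePerturbation

variable [DecidableEq ι]

namespace IsHermitian

variable {M : Matrix ι ι ℝ} (hM : M.IsHermitian)
include hM

theorem dotProduct_eigenvectorBasis (i j : ι) :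
    ⇑(hM.eigenvectorBasis i) ⬝ᵥ ⇑(hM.eigenvectorBasis j) = if i = j then 1 else 0 := by
  simpa [PiLp.inner_apply, dotProduct, mul_comm] using
    orthonormal_iff_ite.mp hM.eigenvectorBasis.orthonormal i j

theorem dotProduct_mulVec_eigenvectorBasis_add {i j : ι} (hij : i ≠ j) (a b : ℝ) :
    (a • ⇑(hM.eigenvectorBasis i) + b • ⇑(hM.eigenvectorBasis j)) ⬝ᵥ
      M *ᵥ (a • ⇑(hM.eigenvectorBasis i) + b • ⇑(hM.eigenvectorBasis j)) =
      a ^ 2 * hM.eigenvalues i + b ^ 2 * hM.eigenvalues j := by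
  simp only [mulVec_add, mulVec_smul, mulVec_eigenvectorBasis, add_dotProduct, dotProduct_add,
    smul_dotProduct, dotProduct_smul, dotProduct_eigenvectorBasis, if_pos, if_neg hij,
    if_neg hij.symm, smul_eq_mul]
  ring

theorem card_neg_eigenvalues_le_one (c : ι → ℝ) (hc : ∀ x, c ⬝ᵥ x = 0 → 0 ≤ x ⬝ᵥ M *ᵥ x) :
    (Finset.univ.filter fun i => hM.eigenvalues i < 0).card ≤ 1 := by
  refine Finset.card_le_one.mpr fun i hi j hj => by_contra fun hij => ?_
  simp only [Finset.mem_filter, Finset.mem_univ, true_and] at hi hj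
  set p := c ⬝ᵥ ⇑(hM.eigenvectorBasis i)
  set q := c ⬝ᵥ ⇑(hM.eigenvectorBasis j)
  -- `a • vᵢ + b • vⱼ` will be a nonzero vector of the hyperplane `c ⬝ᵥ x = 0`
  obtain ⟨a, b, hab, hperp⟩ : ∃ a b : ℝ, (a ≠ 0 ∨ b ≠ 0) ∧ a * p + b * q = 0 := by
    by_cases hpq : p = 0 ∧ q = 0
    · exact ⟨1, 0, Or.inl one_ne_zero, by simp [hpq.1]⟩
    · refine ⟨q, -p, ?_, by ring⟩
      rw [neg_ne_zero]
      tauto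
  have hnonneg := hc (a • ⇑(hM.eigenvectorBasis i) + b • ⇑(hM.eigenvectorBasis j))
    (by simpa [dotProduct_add, dotProduct_smul] using hperp)
  rw [hM.dotProduct_mulVec_eigenvectorBasis_add hij] at hnonneg
  rcases hab with ha | hb
  · nlinarith [pow_pos (sq_pos_of_ne_zero ha) 1, sq_nonneg b]
  · nlinarith [pow_pos (sq_pos_of_ne_zero hb) 1, sq_nonneg a]

end IsHermitian

end Matrix

section SphericalCode

variable {α β : ℝ} {d n : ℕ} {u : Fin n → EuclideanSpace ℝ (Fin d)}

theorem gram_eq_of_isSphericalCode (hu : IsSphericalCode α β u) (hαβ : α ≠ β) :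
    gram ℝ u =
      (α - β) • (((1 - α) / (α - β)) • (1 : Matrix (Fin n) (Fin n) ℝ) - betaAdj β u) +
        α • vecMulVec 1 1 := by
  ext i j
  rcases eq_or_ne i j with rfl | hij
  · simp [betaAdj, hu.1 i]
    field_simp
    ring
  · rcases hu.2 i j hij with h | h <;> simp only [rinner] at h <;>
      simp [betaAdj, rinner, hij, h, hαβ]

theorem smul_one_sub_betaAdj_apply_nonpos (lam : ℝ) (u : Fin n → EuclideanSpace ℝ (Fin d))
    {i j : Fin n} (hij : i ≠ j) :
    (lam • (1 : Matrix (Fin n) (Fin n) ℝ) - betaAdj β u) i j ≤ 0 := by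
  by_cases h : rinner (u i) (u j) = β <;> simp [betaAdj, hij, h]

end SphericalCode

theorem stmt10_general (d n : ℕ)
    (α β lam : ℝ) (hβα : β < α) (hα₀ : 0 < α)
    (hlam : lam = (1 - α) / (α - β))
    (u : Fin n → EuclideanSpace ℝ (Fin d)) (hu : IsSphericalCode α β u)
    (r : ℕ) (hr : r = Module.finrank ℝ (Submodule.span ℝ (Set.range u)))
    (M : Matrix (Fin n) (Fin n) ℝ)
    (hM : M = lam • (1 : Matrix (Fin n) (Fin n) ℝ) - betaAdj β u)
    (hherm : M.IsHermitian) :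
    (Finset.univ.filter fun i => hherm.eigenvalues i < 0).card ≤ 1 ∧
    (M.PosDef → n = r) ∧
    (M.PosSemidef → M.det = 0 → (M.rank : ℤ) = (r : ℤ) - 1) := by
  have hαβ : 0 < α - β := sub_pos.mpr hβα
  have hG : gram ℝ u = (α - β) • M + α • vecMulVec 1 1 := by
    rw [hM, hlam]
    exact gram_eq_of_isSphericalCode hu hβα.ne'
  have hrank : (gram ℝ u).rank = r := by rw [rank_gram, hr]
  have hGpsd := posSemidef_gram ℝ u
  rw [hG] at hGpsd hrank
  refine ⟨hherm.card_neg_eigenvalues_le_one 1 fun x hx =>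
    hGpsd.dotProduct_mulVec_nonneg_of_smul_add_smul_vecMulVec hαβ hx, fun hpd => ?_,
    fun hpsd hdet => ?_⟩
  · rwa [rank_of_isUnit _ (hpd.smul_add_smul_vecMulVec hαβ hα₀.le 1).isUnit, Fintype.card_fin]
      at hrank
  · obtain ⟨z, hz, hMz⟩ := exists_mulVec_eq_zero_iff.mpr hdet
    have hMw : M *ᵥ |z| = 0 := hpsd.mulVec_abs_eq_zero
      (fun i j hij => hM ▸ smul_one_sub_betaAdj_apply_nonpos lam u hij) hMz
    have hw : 1 ⬝ᵥ |z| ≠ 0 := by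
      obtain ⟨k, hk⟩ := Function.ne_iff.mp hz
      rw [one_dotProduct]
      exact (Finset.sum_pos' (fun i _ => abs_nonneg (z i))
        ⟨k, Finset.mem_univ k, abs_pos.mpr hk⟩).ne'
    rw [← hrank, hpsd.rank_smul_add_smul_vecMulVec hαβ hα₀ hMw hw]
    push_cast
    ring

/-- for a spherical `{α,β}`-code with `α > 0`, `λ = (1-α)/(α-β)` and `A`
the adjacency matrix of the associated `β`-graph, the matrix `λI - A` has at most one
negative eigenvalue; if `λI - A` is positive definite then `n = r`; and if `λI - A` is
positive semidefinite and singular then `rank(λI - A) = r - 1`. -/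
theorem stmt10 (d n : ℕ)
    (α β lam : ℝ) (hβ₁ : -1 ≤ β) (hβα : β < α) (hα : α < 1) (hα₀ : 0 < α)
    (hlam : lam = (1 - α) / (α - β))
    (u : Fin n → EuclideanSpace ℝ (Fin d)) (hu : IsSphericalCode α β u)
    (r : ℕ) (hr : r = Module.finrank ℝ (Submodule.span ℝ (Set.range u)))
    (M : Matrix (Fin n) (Fin n) ℝ)
    (hM : M = lam • (1 : Matrix (Fin n) (Fin n) ℝ) - betaAdj β u)
    (hherm : M.IsHermitian) :
    (Finset.univ.filter fun i => hherm.eigenvalues i < 0).card ≤ 1 ∧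
    (M.PosDef → n = r) ∧
    (M.PosSemidef → M.det = 0 → (M.rank : ℤ) = (r : ℤ) - 1) :=
  stmt10_general d n α β lam hβα hα₀ hlam u hu r hr M hM hherm
end
end
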